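/- Let G be a finite abelian group with |G| = m and let A ⊆ G. If R_A(g) ≤ 7 for all g ∈ G, then |S_4| ≤ 4|A| + 3|S_0| + 3, where |S_0| and |S_4| denote the number of elements g ∈ G with R_A(g) = 0 and R_A(g) = 4, respectively. -/

import Mathlib

/-- `repFn A g` is the number of ordered pairs `(a, a') ∈ A × A` with `a + a' = g`. -/
def repFn {G : Type*} [AddCommGroup G] [DecidableEq G] (A : Finset G) (g : G) : ℕ :=
  ((A ×ˢ A).filter fun p => p.1 + p.2 = g).card

/-!
Write `n = |A|`, `m = |G|` and `E` for the additive energy of `A`. Besides `E = ∑ R_A(g)²` we have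
`E = ∑ D(t)²`, where `D(t)` counts the representations `t = a - a'`; since `D(0) = n`,
`∑ D(t) = n²` and `(D - 3)(D - 4) ≥ 0` for integers, `E ≥ 8n² - 7n - 12m + 12`.
On the other hand `4·[r = 4] + 12·[r ≠ 0] + r² ≤ 8r + 5·[r odd]` for `0 ≤ r ≤ 7`, and `R_A(g)` is
odd only if `g = a + a` with `a ∈ A` (swapping the pair is an involution on the representations),
so for at most `n` values of `g`. Summing over `g` and comparing gives `|S_4| ≤ 3n + 3|S_0| - 3`.
-/

open Finset
open scoped Pointwise Combinatorics.Additive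

lemma Finset.even_card_of_involution {α : Type*} {s : Finset α} (σ : α → α)
    (hσ_mem : ∀ x ∈ s, σ x ∈ s) (hσ_invol : ∀ x ∈ s, σ (σ x) = x)
    (hσ_ne : ∀ x ∈ s, σ x ≠ x) : Even #s := by
  rw [← ZMod.natCast_eq_zero_iff_even, card_eq_sum_ones, Nat.cast_sum, Nat.cast_one]
  exact sum_involution (fun x _ => σ x) (fun _ _ => rfl) (fun x hx _ => hσ_ne x hx)
    hσ_mem hσ_invol

lemma Finset.sum_card_filter_add_eq {α : Type*} [AddCommMonoid α] [Fintype α] [DecidableEq α]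
    (s t : Finset α) : ∑ a, #{xy ∈ s ×ˢ t | xy.1 + xy.2 = a} = #s * #t := by
  rw [← card_product, card_eq_sum_card_fiberwise (f := fun xy : α × α => xy.1 + xy.2)
    (t := univ) fun _ _ => mem_univ _]

lemma Finset.addEnergy_neg_right {α : Type*} [AddCommGroup α] [DecidableEq α]
    (s t : Finset α) : E[s, -t] = E[s, t] := by
  refine card_nbij' (fun x => (x.1, -x.2.2, -x.2.1)) (fun x => (x.1, -x.2.2, -x.2.1))
    ?_ ?_ ?_ ?_ <;> rintro ⟨⟨a₁, a₂⟩, b₁, b₂⟩ hx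
  all_goals simp_all [← sub_eq_add_neg, sub_eq_sub_iff_add_eq_add, and_comm]

lemma Finset.card_filter_add_neg_eq_zero {α : Type*} [AddGroup α] [DecidableEq α]
    (s : Finset α) : #{xy ∈ s ×ˢ (-s) | xy.1 + xy.2 = 0} = #s := by
  refine card_nbij' Prod.fst (fun a => (a, -a)) ?_ ?_ ?_ ?_
  · rintro ⟨a, b⟩ h
    simp_all
  · intro a ha
    simp_all
  · rintro ⟨a, b⟩ h
    simp_all [add_eq_zero_iff_eq_neg]
  · intro a _
    rfl

section
variable {G : Type*} [AddCommGroup G] [DecidableEq G] (A : Finset G)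

lemma exists_add_self_eq_of_odd_repFn {g : G} (hg : Odd (repFn A g)) : ∃ a ∈ A, a + a = g := by
  by_contra! hno
  refine Nat.not_even_iff_odd.2 hg (even_card_of_involution Prod.swap ?_ ?_ ?_)
  · rintro ⟨a, b⟩ hab
    simp_all [add_comm]
  · simp
  · rintro ⟨a, b⟩ hab hswap
    simp only [Prod.swap_prod_mk, Prod.mk.injEq] at hswap
    simp only [mem_filter, mem_product] at hab
    exact hno a hab.1.1 (hswap.1 ▸ hab.2)

variable [Fintype G]

lemma sum_repFn : ∑ g, repFn A g = #A * #A := sum_card_filter_add_eq A A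

lemma sum_repFn_sq : ∑ g, repFn A g ^ 2 = E[A] := (addEnergy_eq_sum_sq A A).symm

lemma card_filter_odd_repFn_le : #{g | Odd (repFn A g)} ≤ #A := by
  refine (card_le_card fun g hg => ?_).trans (card_image_le (f := fun a => a + a))
  obtain ⟨a, ha, rfl⟩ := exists_add_self_eq_of_odd_repFn A (mem_filter.1 hg).2
  exact mem_image_of_mem _ ha

lemma sub_mul_sub_add_mul_sq_le_addEnergy (k : ℤ) :
    (#A - k) * (#A - k - 1) + (2 * k + 1) * #A ^ 2 ≤ E[A] + k * (k + 1) * Fintype.card G := by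
  set D : G → ℤ := fun t => #{xy ∈ A ×ˢ (-A) | xy.1 + xy.2 = t}
  have hD_sum : ∑ t, D t = #A ^ 2 := by
    simp only [D]
    rw [← Nat.cast_sum, sum_card_filter_add_eq, card_neg, sq, Nat.cast_mul]
  have hD_sq : ∑ t, D t ^ 2 = E[A] := by
    simp only [D]
    rw [← addEnergy_neg_right, addEnergy_eq_sum_sq]
    push_cast
    rfl
  have hD_zero : D 0 = #A := by
    simp only [D, card_filter_add_neg_eq_zero]
  have hD_term : ∀ t, 0 ≤ (D t - k) * (D t - k - 1) := fun t => by
    rcases le_or_gt (D t) k with h | h <;> nlinarith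
  calc (#A - k) * (#A - k - 1) + (2 * k + 1) * #A ^ 2
      = (D 0 - k) * (D 0 - k - 1) + (2 * k + 1) * ∑ t, D t := by rw [hD_zero, hD_sum]
    _ ≤ ∑ t, (D t - k) * (D t - k - 1) + (2 * k + 1) * ∑ t, D t := by
      gcongr
      exact single_le_sum (fun t _ => hD_term t) (mem_univ 0)
    _ = ∑ t, D t ^ 2 + k * (k + 1) * Fintype.card G := by
      have hexpand : ∀ t, (D t - k) * (D t - k - 1) + (2 * k + 1) * D t = D t ^ 2 + k * (k + 1) :=
        fun t => by ring
      rw [mul_sum, ← sum_add_distrib]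
      simp only [hexpand, sum_add_distrib, sum_const, card_univ, nsmul_eq_mul]
      ring
    _ = E[A] + k * (k + 1) * Fintype.card G := by rw [hD_sq]

end

lemma ite_weight_le_of_le_seven {r : ℕ} (hr : r ≤ 7) :
    4 * (if r = 4 then 1 else 0) + 12 * (if r ≠ 0 then 1 else 0) + r ^ 2 ≤
      8 * r + 5 * (if Odd r then 1 else 0) := by
  interval_cases r <;> decide

theorem stmt_7_general {G : Type*} [AddCommGroup G] [Fintype G] [DecidableEq G]
    (A : Finset G)
    (h : ∀ g : G, repFn A g ≤ 7) :
    (Finset.univ.filter fun g : G => repFn A g = 4).card ≤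
      4 * A.card + 3 * (Finset.univ.filter fun g : G => repFn A g = 0).card + 3 := by
  have hweight := sum_le_sum fun g (_ : g ∈ univ) => ite_weight_le_of_le_seven (h g)
  simp only [sum_add_distrib, ← mul_sum, ← card_filter, sum_repFn_sq, sum_repFn] at hweight
  have henergy := sub_mul_sub_add_mul_sq_le_addEnergy A 3
  have hodd := card_filter_odd_repFn_le A
  have hsplit := card_filter_add_card_filter_not (s := univ) fun g => repFn A g = 0
  rw [card_univ] at hsplit
  zify at *
  linarith

theorem stmt_7 {G : Type*} [AddCommGroup G] [Fintype G] [DecidableEq G]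
    (m : ℕ) (hm : Fintype.card G = m) (A : Finset G)
    (h : ∀ g : G, repFn A g ≤ 7) :
    (Finset.univ.filter fun g : G => repFn A g = 4).card ≤
      4 * A.card + 3 * (Finset.univ.filter fun g : G => repFn A g = 0).card + 3 :=
  stmt_7_general A h
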